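/- arXiv:1203.1849 — 7 statements merged into one kernel-verified Lean document; each statement's English description precedes it below -/
import Mathlib

section
/- Let alpha in F_{q^{mn}} satisfy F_{q^{mn}} = F_q(alpha). The F_q-span Lambda of {1, alpha^n, alpha^{2n}, ..., alpha^{(m-1)n}} is an m-dimensional alpha-splitting subspace of F_{q^{mn}}. -/
/-!
If `α` generates `E` over `F` and `[E : F] = m * n`, then the powers `α ^ k`, `k < m * n`, form a
basis of `E`. Writing `k = j + n * i` with `j < n` and `i < m` splits this basis into `n` blocks, and the
`j`-th block spans exactly `α ^ j • Λ`; a partition of a basis gives a direct sum decomposition.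
-/

open Pointwise

/-- `W` is an `α`-splitting subspace: the whole space is the internal direct sum
`W ⊕ αW ⊕ ⋯ ⊕ α^(n-1)W`. -/
def IsSplitting {F E : Type*} [Field F] [Field E] [Algebra F E]
    (n : ℕ) (α : E) (W : Submodule F E) : Prop :=
  DirectSum.IsInternal (fun i : Fin n => α ^ (i : ℕ) • W)

open Submodule Set

theorem Module.Basis.isInternal_span_image_preimage {ι κ R M : Type*} [DecidableEq κ] [Ring R]
    [AddCommGroup M] [Module R M] (b : Module.Basis ι R M) (f : ι → κ) :
    DirectSum.IsInternal fun k => span R (b '' (f ⁻¹' {k})) := by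
  apply DirectSum.isInternal_submodule_of_iSupIndep_of_iSup_eq_top
  · intro k
    simp_rw [← span_iUnion, ← image_iUnion]
    refine b.linearIndependent.disjoint_span_image ?_
    simp only [disjoint_iUnion_right]
    exact fun j hj => (disjoint_singleton.mpr (Ne.symm hj)).preimage f
  · rw [← span_iUnion, ← image_iUnion, ← preimage_iUnion, iUnion_of_singleton, preimage_univ,
      image_univ, b.span_eq]

namespace PowerBasis

section Ring

variable {K S : Type*} [Field K] [Ring S] [Algebra K S] {m n : ℕ}

noncomputable def basisFinProd (pb : PowerBasis K S) (h : pb.dim = m * n) :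
    Module.Basis (Fin m × Fin n) K S :=
  pb.basis.reindex ((finCongr h).trans finProdFinEquiv.symm)

@[simp]
theorem basisFinProd_apply (pb : PowerBasis K S) (h : pb.dim = m * n) (p : Fin m × Fin n) :
    pb.basisFinProd h p = pb.gen ^ ((p.2 : ℕ) + n * p.1) := by
  simp [basisFinProd, Module.Basis.reindex_apply, pb.basis_eq_pow]

theorem linearIndependent_pow_mul (pb : PowerBasis K S) (h : pb.dim = m * n) (hn : 0 < n) :
    LinearIndependent K fun i : Fin m => pb.gen ^ (n * (i : ℕ)) := by
  simpa [Function.comp_def] using (pb.basisFinProd h).linearIndependent.comp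
    (fun i => (i, ⟨0, hn⟩)) fun i i' hii' => (Prod.ext_iff.mp hii').1

theorem finrank_span_pow_mul (pb : PowerBasis K S) (h : pb.dim = m * n) (hn : 0 < n) :
    Module.finrank K (span K (range fun i : Fin m => pb.gen ^ (n * (i : ℕ)))) = m := by
  rw [finrank_span_eq_card (pb.linearIndependent_pow_mul h hn), Fintype.card_fin]

end Ring

section CommRing

variable {K S : Type*} [Field K] [CommRing S] [Algebra K S] {m n : ℕ}

theorem pow_smul_span_pow_mul (pb : PowerBasis K S) (h : pb.dim = m * n) (j : Fin n) :
    pb.gen ^ (j : ℕ) • span K (range fun i : Fin m => pb.gen ^ (n * (i : ℕ))) =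
      span K (pb.basisFinProd h '' (Prod.snd ⁻¹' {j})) := by
  rw [smul_span, smul_set_range]
  congr 1
  ext x
  simp [pow_add]

end CommRing

theorem isSplitting_span_pow_mul {K E : Type*} [Field K] [Field E] [Algebra K E] {m n : ℕ}
    (pb : PowerBasis K E) (h : pb.dim = m * n) :
    IsSplitting n pb.gen (span K (range fun i : Fin m => pb.gen ^ (n * (i : ℕ)))) := by
  unfold IsSplitting
  simp_rw [pb.pow_smul_span_pow_mul h]
  exact (pb.basisFinProd h).isInternal_span_image_preimage Prod.snd

end PowerBasis

theorem stmt6_general (F E : Type*) [Field F] [Field E] [Algebra F E]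
    (m n : ℕ) (hm : 0 < m) (hn : 0 < n) (hdim : Module.finrank F E = m * n)
    (α : E) (hα : Algebra.adjoin F {α} = ⊤) :
    Module.finrank F (Submodule.span F (Set.range fun i : Fin m => α ^ (n * (i : ℕ)))) = m ∧
    IsSplitting n α (Submodule.span F (Set.range fun i : Fin m => α ^ (n * (i : ℕ)))) := by
  have : FiniteDimensional F E := .of_finrank_pos (hdim ▸ Nat.mul_pos hm hn)
  let pb := PowerBasis.ofAdjoinEqTop (Algebra.IsIntegral.isIntegral α) hα
  have hdim' : pb.dim = m * n := by rw [← pb.finrank, hdim]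
  exact ⟨pb.finrank_span_pow_mul hdim' hn, pb.isSplitting_span_pow_mul hdim'⟩

theorem stmt6 (F E : Type*) [Field F] [Fintype F] [Field E] [Algebra F E]
    (m n : ℕ) (hm : 0 < m) (hn : 0 < n) (hdim : Module.finrank F E = m * n)
    (α : E) (hα : Algebra.adjoin F {α} = ⊤) :
    Module.finrank F (Submodule.span F (Set.range fun i : Fin m => α ^ (n * (i : ℕ)))) = m ∧
    IsSplitting n α (Submodule.span F (Set.range fun i : Fin m => α ^ (n * (i : ℕ)))) :=
  stmt6_general F E m n hm hn hdim α hα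
end

section
/- Let alpha in F_{q^4} with F_{q^4} = F_q(alpha). The number of 2-dimensional alpha-splitting F_q-subspaces of F_{q^4} equals [4 choose 2]_q - [2 choose 1]_q = q^2 (q^4-1)/(q^2-1). -/
/-!
A plane `W ≤ E` fails to be `α`-splitting iff `W ∩ αW ≠ 0`, i.e. iff `W` contains `y` and `αy`
for some `y ≠ 0`, i.e. iff `W = y • L` with `L = span {1, α}`. So the non-splitting planes form
the orbit of `L` under `Eˣ`. Its stabilizer is `Fˣ`: if `u = a + bα` with `b ≠ 0` satisfied
`uL = L`, then `L` would be stable under multiplication by `α`, hence contain `F[α] = E`. This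
gives `(q⁴ - 1)/(q - 1)` non-splitting planes, to be subtracted from the number of all planes,
which is read off from the number of linearly independent pairs.
-/

open Pointwise

open Module Submodule

theorem card_subtype_and_add_card_subtype_and_not {α : Type*} [Finite α] (p r : α → Prop) :
    Nat.card {x // p x ∧ r x} + Nat.card {x // p x ∧ ¬ r x} = Nat.card {x // p x} := by
  classical
  rw [← Nat.card_congr (Equiv.subtypeSubtypeEquivSubtypeInter p r),
    ← Nat.card_congr (Equiv.subtypeSubtypeEquivSubtypeInter p (¬ r ·)), ← Nat.card_sum,
    Nat.card_congr (Equiv.sumCompl _)]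

section SubspaceCount

variable {K V : Type*} [Field K] [AddCommGroup V] [Module K V]

def spanOfLinearIndependent {k : ℕ} (s : {s : Fin k → V // LinearIndependent K s}) :
    {W : Submodule K V // finrank K W = k} :=
  ⟨span K (Set.range s.1), by simpa using finrank_span_eq_card s.2⟩

def spanOfLinearIndependentFiberEquiv [FiniteDimensional K V] {k : ℕ}
    (W : {W : Submodule K V // finrank K W = k}) :
    {s // spanOfLinearIndependent s = W} ≃ {t : Fin k → W.1 // LinearIndependent K t} where
  toFun s := ⟨fun i => ⟨s.1.1 i, congrArg Subtype.val s.2 ▸ subset_span ⟨i, rfl⟩⟩,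
    .of_comp W.1.subtype s.1.2⟩
  invFun t := ⟨⟨fun i => t.1 i, t.2.map' W.1.subtype (ker_subtype _)⟩, by
    refine Subtype.ext (eq_of_le_of_finrank_eq ?_ ?_)
    · rw [spanOfLinearIndependent, span_le]
      rintro _ ⟨i, rfl⟩
      exact (t.1 i).2
    · rw [(spanOfLinearIndependent _).2, W.2]⟩
  left_inv _ := rfl
  right_inv _ := rfl

theorem card_subspaces_finrank_mul [Fintype K] [Finite V] {k : ℕ} (hk : k ≤ finrank K V) :
    Nat.card {W : Submodule K V // finrank K W = k} *
        ∏ i : Fin k, (Fintype.card K ^ k - Fintype.card K ^ i.val) =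
      ∏ i : Fin k, (Fintype.card K ^ finrank K V - Fintype.card K ^ i.val) := by
  have := Module.finite_of_finite K (M := V)
  have := Fintype.ofFinite {W : Submodule K V // finrank K W = k}
  rw [← card_linearIndependent hk,
    ← Nat.card_congr (Equiv.sigmaFiberEquiv spanOfLinearIndependent), Nat.card_sigma]
  have hfiber (W : {W : Submodule K V // finrank K W = k}) :
      Nat.card {s // spanOfLinearIndependent s = W} =
        ∏ i : Fin k, (Fintype.card K ^ k - Fintype.card K ^ i.val) := by
    rw [Nat.card_congr (spanOfLinearIndependentFiberEquiv W), card_linearIndependent W.2.ge, W.2]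
  simp only [hfiber, Finset.sum_const, Finset.card_univ, smul_eq_mul, Nat.card_eq_fintype_card]

end SubspaceCount

section Splitting

variable {F E : Type*} [Field F] [Field E] [Algebra F E]

theorem isSplitting_two_iff (α : E) (W : Submodule F E) :
    IsSplitting 2 α W ↔ IsCompl W (α • W) := by
  rw [IsSplitting, DirectSum.isInternal_submodule_iff_isCompl _ zero_ne_one
    (by ext i; fin_cases i <;> simp)]
  simp

theorem finrank_units_smul (u : Eˣ) (W : Submodule F E) :
    finrank F (u • W : Submodule F E) = finrank F W :=
  LinearEquiv.finrank_map_eq (DistribMulAction.toLinearEquiv F E u) W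

theorem notMem_range_algebraMap_of_adjoin_eq_top {α : E} (hadj : Algebra.adjoin F {α} = ⊤)
    (hdim : finrank F E ≠ 1) : α ∉ Set.range (algebraMap F E) := by
  rintro ⟨c, rfl⟩
  rw [Algebra.adjoin_singleton_algebraMap] at hadj
  exact hdim (Subalgebra.bot_eq_top_iff_finrank_eq_one.mp hadj)

theorem finrank_span_one_pair {α : E} (hα : α ∉ Set.range (algebraMap F E)) :
    finrank F (span F {1, α}) = 2 := by
  have hind : LinearIndependent F ![(1 : E), α] := by
    refine LinearIndependent.pair_iff.mpr fun s t hst => ?_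
    by_cases ht : t = 0
    · simp_all
    · refine (hα ⟨-(t⁻¹ * s), ?_⟩).elim
      rw [Algebra.algebraMap_eq_smul_one, ← inv_smul_smul₀ ht α,
        eq_neg_of_add_eq_zero_right hst, smul_neg, smul_smul, neg_smul]
  rw [← Matrix.range_cons_cons_empty 1 α ![], finrank_span_eq_card hind, Fintype.card_fin]

theorem units_smul_span_one_pair (u : Eˣ) (α : E) :
    u • span F {1, α} = span F {(u : E), u * α} := by
  refine (smul_span u _).trans ?_
  rw [Set.smul_set_insert, Set.smul_set_singleton, Units.smul_def, Units.smul_def,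
    smul_eq_mul, smul_eq_mul, mul_one]

theorem toSubmodule_adjoin_singleton_le {x : E} {S : Submodule F E} (h1 : 1 ∈ S)
    (hx : ∀ s ∈ S, x * s ∈ S) : Subalgebra.toSubmodule (Algebra.adjoin F {x}) ≤ S := by
  intro y hy
  suffices ∀ s ∈ S, y * s ∈ S by simpa using this 1 h1
  induction hy using Algebra.adjoin_induction with
  | mem _ h => exact (Set.mem_singleton_iff.mp h) ▸ hx
  | algebraMap c => exact fun s hs => by simpa [Algebra.smul_def] using S.smul_mem c hs
  | add y z _ _ hy hz => exact fun s hs => by rw [add_mul]; exact S.add_mem (hy s hs) (hz s hs)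
  | mul y z _ _ hy hz => exact fun s hs => by rw [mul_assoc]; exact hy _ (hz s hs)

theorem mem_range_algebraMap_of_smul_span_one_pair_eq {α : E}
    (hadj : Algebra.adjoin F {α} = ⊤) (hne : span F {1, α} ≠ ⊤) {u : Eˣ}
    (hu : u • span F {1, α} = span F {1, α}) : (u : E) ∈ Set.range (algebraMap F E) := by
  set L := span F ({1, α} : Set E)
  have hmul (s : E) (hs : s ∈ L) : (u : E) * s ∈ L := hu ▸ smul_mem_pointwise_smul s u L hs
  obtain ⟨a, b, hab⟩ := mem_span_pair.mp (by simpa using hmul 1 (subset_span (by simp)))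
  by_cases hb : b = 0
  · exact ⟨a, by simp_all [Algebra.algebraMap_eq_smul_one]⟩
  refine (hne (eq_top_iff.mpr ?_)).elim
  have hα (s : E) (hs : s ∈ L) : α * s ∈ L := by
    have : α * s = b⁻¹ • ((u : E) * s - a • s) := by
      rw [← hab, add_mul, smul_mul_assoc, smul_mul_assoc, one_mul, add_sub_cancel_left,
        inv_smul_smul₀ hb]
    exact this ▸ L.smul_mem _ (L.sub_mem (hmul s hs) (L.smul_mem a hs))
  simpa [hadj] using toSubmodule_adjoin_singleton_le (subset_span (by simp)) hα

theorem finrank_eq_two_and_not_isSplitting_iff {α : E} (hdim : finrank F E = 4)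
    (hα : α ∉ Set.range (algebraMap F E)) {W : Submodule F E} :
    finrank F W = 2 ∧ ¬ IsSplitting 2 α W ↔ W ∈ MulAction.orbit Eˣ (span F {1, α}) := by
  have hα0 : α ≠ 0 := fun h => hα ⟨0, by rw [h, map_zero]⟩
  have hL := finrank_span_one_pair hα
  rw [isSplitting_two_iff, MulAction.mem_orbit_iff]
  constructor
  · rintro ⟨hW, hnc⟩
    have : FiniteDimensional F E := Module.finite_of_finrank_pos (by omega)
    have hαW : finrank F (α • W : Submodule F E) = 2 :=
      finrank_units_smul (Units.mk0 α hα0) W ▸ hW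
    rw [isCompl_iff_disjoint _ _ (by omega), disjoint_def] at hnc
    push Not at hnc
    obtain ⟨x, hxW, hxαW, hx0⟩ := hnc
    obtain ⟨y, hyW, rfl⟩ := (mem_smul_pointwise_iff_exists _ _ _).mp hxαW
    have hy0 : y ≠ 0 := by rintro rfl; simp at hx0
    refine ⟨Units.mk0 y hy0, eq_of_le_of_finrank_eq ?_ (by rw [finrank_units_smul, hL, hW])⟩
    rw [units_smul_span_one_pair, span_le, Set.insert_subset_iff, Set.singleton_subset_iff]
    exact ⟨hyW, by simpa [mul_comm] using hxW⟩
  · rintro ⟨u, rfl⟩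
    refine ⟨by rw [finrank_units_smul, hL], fun hc => ?_⟩
    have hmem : (u : E) * α ∈ u • span F {1, α} := by
      rw [units_smul_span_one_pair]; exact subset_span (by simp)
    have hmemα : (u : E) * α ∈ α • (u • span F {1, α}) := by
      rw [mul_comm]; exact smul_mem_pointwise_smul _ α _ (by
        rw [units_smul_span_one_pair]; exact subset_span (by simp))
    exact mul_ne_zero u.ne_zero hα0 (disjoint_def.mp hc.disjoint _ hmem hmemα)

theorem stabilizer_span_one_pair [FiniteDimensional F E] {α : E}
    (hadj : Algebra.adjoin F {α} = ⊤) (hne : span F {1, α} ≠ ⊤) :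
    MulAction.stabilizer Eˣ (span F {1, α}) = (Units.map (algebraMap F E).toMonoidHom).range := by
  ext u
  rw [MulAction.mem_stabilizer_iff, MonoidHom.mem_range]
  constructor
  · intro hu
    obtain ⟨c, hc⟩ := mem_range_algebraMap_of_smul_span_one_pair_eq hadj hne hu
    have hc0 : c ≠ 0 := by rintro rfl; exact u.ne_zero (by rw [← hc, map_zero])
    exact ⟨Units.mk0 c hc0, Units.ext hc⟩
  · rintro ⟨c, rfl⟩
    refine eq_of_le_of_finrank_eq ?_ (finrank_units_smul _ _)
    rintro _ ⟨l, hl, rfl⟩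
    simpa [Algebra.smul_def] using (span F {1, α}).smul_mem (c : F) hl

theorem card_not_isSplitting_mul [Fintype F] {α : E} (hdim : finrank F E = 4)
    (hadj : Algebra.adjoin F {α} = ⊤) :
    Nat.card {W : Submodule F E // finrank F W = 2 ∧ ¬ IsSplitting 2 α W} *
        (Fintype.card F - 1) = Fintype.card F ^ 4 - 1 := by
  have : FiniteDimensional F E := Module.finite_of_finrank_pos (by omega)
  have hα := notMem_range_algebraMap_of_adjoin_eq_top hadj (by omega)
  have hne : span F {1, α} ≠ ⊤ := fun h => by
    have := finrank_span_one_pair hα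
    rw [h, finrank_top, hdim] at this
    omega
  have hstab : Nat.card (MulAction.stabilizer Eˣ (span F {1, α})) = Fintype.card F - 1 := by
    rw [stabilizer_span_one_pair hadj hne, ← Nat.card_congr (MonoidHom.ofInjective
      (Units.map_injective (algebraMap F E).injective)).toEquiv, Nat.card_units,
      Nat.card_eq_fintype_card]
  rw [Nat.card_congr
      (Equiv.subtypeEquivRight fun W => finrank_eq_two_and_not_isSplitting_iff hdim hα),
    ← hstab, ← Nat.card_prod, Nat.card_congr (MulAction.orbitProdStabilizerEquivGroup _ _),
    Nat.card_units, Module.natCard_eq_pow_finrank (K := F), hdim, Nat.card_eq_fintype_card]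

end Splitting

theorem eq_of_add_eq_gaussian_counts {q A B T : ℕ} (hq : 2 ≤ q) (hAB : A + B = T)
    (hB : B * (q - 1) = q ^ 4 - 1)
    (hT : T * ((q ^ 2 - 1) * (q ^ 2 - q)) = (q ^ 4 - 1) * (q ^ 4 - q)) :
    A = q ^ 2 * ((q ^ 4 - 1) / (q ^ 2 - 1)) := by
  have h1 : 1 ≤ q ^ 2 := Nat.one_le_pow _ _ (by omega)
  have h2 : q ≤ q ^ 2 := Nat.le_self_pow (by norm_num) q
  have h3 : q ≤ q ^ 4 := Nat.le_self_pow (by norm_num) q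
  have h4 : 1 ≤ q ^ 4 := Nat.one_le_pow _ _ (by omega)
  have hB' : B = q ^ 3 + q ^ 2 + q + 1 := by
    refine Nat.eq_of_mul_eq_mul_right (by omega : 0 < q - 1) (hB.trans ?_)
    zify [h4, (by omega : 1 ≤ q)]; ring
  have hT' : T = (q ^ 2 + 1) * (q ^ 2 + q + 1) := by
    have : q < q ^ 2 := by nlinarith
    refine Nat.eq_of_mul_eq_mul_right (Nat.mul_pos (by omega) (by omega)) (hT.trans ?_)
    zify [h1, h2, h3, h4]; ring
  have hdiv : (q ^ 4 - 1) / (q ^ 2 - 1) = q ^ 2 + 1 := by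
    rw [Nat.div_eq_iff_eq_mul_left (by omega) ⟨q ^ 2 + 1, by zify [h1, h4]; ring⟩]
    zify [h1, h4]; ring
  rw [hdiv]; subst hB' hT'; linarith

theorem stmt10 (F E : Type*) [Field F] [Fintype F] [Field E] [Algebra F E]
    (q : ℕ) (hq : q = Fintype.card F) (hdim : Module.finrank F E = 4)
    (α : E) (hα : Algebra.adjoin F {α} = ⊤) :
    Nat.card {W : Submodule F E // Module.finrank F W = 2 ∧ IsSplitting 2 α W} =
      q ^ 2 * ((q ^ 4 - 1) / (q ^ 2 - 1)) := by
  subst hq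
  have : FiniteDimensional F E := Module.finite_of_finrank_pos (by omega)
  have : Finite E := Module.finite_of_finite F
  have htotal := card_subspaces_finrank_mul (K := F) (V := E) (k := 2) (by omega)
  simp only [hdim, Fin.prod_univ_two, Fin.val_zero, Fin.val_one, pow_zero, pow_one] at htotal
  exact eq_of_add_eq_gaussian_counts Fintype.one_lt_card
    (card_subtype_and_add_card_subtype_and_not _ _) (card_not_isSplitting_mul hdim hα) htotal
end

section
/- Let alpha in F_{q^{2n}} with F_{q^{2n}} = F_q(alpha). Then N(alpha,2,n;q) = (q^{2n} - nu - 1)(q^{2n} - 1), where N(alpha,2,n;q) is the number of pairs (v_1, v_2) in F_{q^{2n}}^2 such that {v_1, v_2, alpha v_1, alpha v_2, ..., alpha^{n-1} v_1, alpha^{n-1} v_2} is an F_q-basis of F_{q^{2n}}, and nu is the number of pairs (f_1, f_2) of coprime nonzero polynomials in F_q[X] of degree < n with f_2 monic. -/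
open Pointwise Polynomial

section Aux

variable (F : Type*) {E : Type*} [Field F] [Field E] [Algebra F E]

/-- `w` admits a low-degree rational relation. -/
def Bad (n : ℕ) (α w : E) : Prop :=
  ∃ f g : F[X], g ≠ 0 ∧ f.natDegree < n ∧ g.natDegree < n ∧
    aeval α f + aeval α g * w = 0

variable {F}

theorem minpoly_natDeg {n : ℕ} (hdim : Module.finrank F E = 2 * n) (hn : 0 < n)
    (α : E) (hα : Algebra.adjoin F {α} = ⊤) : (minpoly F α).natDegree = 2 * n := by
  have hfd : FiniteDimensional F E :=
    Module.finite_of_finrank_pos (by rw [hdim]; omega)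
  have hint : IsIntegral F α := IsIntegral.of_finite F α
  let pb : PowerBasis F E := (Algebra.adjoin.powerBasis hint).map
    ((Subalgebra.equivOfEq _ _ hα).trans Subalgebra.topEquiv)
  have h1 : Module.finrank F E = pb.dim := pb.finrank
  have h2 : pb.dim = (minpoly F α).natDegree := rfl
  omega

theorem aeval_ne {n : ℕ} {α : E} (hdeg : (minpoly F α).natDegree = 2 * n)
    {f : F[X]} (hf : f ≠ 0) (hfd : f.natDegree < 2 * n) : aeval α f ≠ 0 := by
  intro h0
  have h1 := minpoly.degree_le_of_ne_zero F α hf h0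
  have h2 := natDegree_le_natDegree h1
  omega

theorem sum_smul_eq {n : ℕ} {f : F[X]} (hfn : f.natDegree < n) (α x : E) :
    ∑ i : Fin n, f.coeff i • (α ^ (i : ℕ) * x) = aeval α f * x := by
  rw [Fin.sum_univ_eq_sum_range (fun i => f.coeff i • (α ^ i * x)) n]
  rw [aeval_eq_sum_range' hfn, Finset.sum_mul]
  refine Finset.sum_congr rfl fun i _ => ?_
  rw [smul_mul_assoc]

theorem eq_zero_of_coeffs {n : ℕ} {f : F[X]} (hfn : f.natDegree < n)
    (h : ∀ i : Fin n, f.coeff i = 0) : f = 0 := by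
  ext i
  by_cases hi : i < n
  · exact h ⟨i, hi⟩
  · exact coeff_eq_zero_of_natDegree_lt (by omega)

theorem indep_iff {n : ℕ} (hn : 0 < n) (α : E) (v : Fin 2 → E) :
    LinearIndependent F (fun p : Fin n × Fin 2 => α ^ (p.1 : ℕ) * v p.2) ↔
    ∀ f g : F[X], f.natDegree < n → g.natDegree < n →
      aeval α f * v 0 + aeval α g * v 1 = 0 → f = 0 ∧ g = 0 := by
  rw [Fintype.linearIndependent_iff]
  constructor
  · intro H f g hf hg hrel
    set c : Fin n × Fin 2 → F := fun p => if p.2 = 0 then f.coeff p.1 else g.coeff p.1 with hc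
    have hsum : ∑ p : Fin n × Fin 2, c p • (α ^ (p.1 : ℕ) * v p.2) = 0 := by
      have e : ∑ p : Fin n × Fin 2, c p • (α ^ (p.1 : ℕ) * v p.2)
          = (∑ i : Fin n, f.coeff i • (α ^ (i : ℕ) * v 0))
            + ∑ i : Fin n, g.coeff i • (α ^ (i : ℕ) * v 1) := by
        rw [Fintype.sum_prod_type, ← Finset.sum_add_distrib]
        refine Finset.sum_congr rfl fun i _ => ?_
        rw [Fin.sum_univ_two]
        simp [hc]
      rw [e, sum_smul_eq hf, sum_smul_eq hg, hrel]
    have hz := H c hsum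
    constructor
    · exact eq_zero_of_coeffs hf fun i => by simpa [hc] using hz (i, 0)
    · exact eq_zero_of_coeffs hg fun i => by simpa [hc] using hz (i, 1)
  · intro H c hsum
    set f : F[X] := ∑ i : Fin n, monomial (i : ℕ) (c (i, 0)) with hf
    set g : F[X] := ∑ i : Fin n, monomial (i : ℕ) (c (i, 1)) with hg
    have hdegf' : f.natDegree ≤ n - 1 := by
      rw [hf]
      exact natDegree_sum_le_of_forall_le _ _ fun i _ =>
        le_trans (natDegree_monomial_le _) (by omega)
    have hdegg' : g.natDegree ≤ n - 1 := by
      rw [hg]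
      exact natDegree_sum_le_of_forall_le _ _ fun i _ =>
        le_trans (natDegree_monomial_le _) (by omega)
    have hdegf : f.natDegree < n := by omega
    have hdegg : g.natDegree < n := by omega
    have hcf : ∀ i : Fin n, f.coeff i = c (i, 0) := by
      intro i
      rw [hf, finset_sum_coeff]
      rw [Finset.sum_eq_single i (fun j _ hj => by
        rw [coeff_monomial, if_neg (fun h => hj (Fin.val_injective h))])
        (fun h => absurd (Finset.mem_univ i) h)]
      rw [coeff_monomial, if_pos rfl]
    have hcg : ∀ i : Fin n, g.coeff i = c (i, 1) := by
      intro i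
      rw [hg, finset_sum_coeff]
      rw [Finset.sum_eq_single i (fun j _ hj => by
        rw [coeff_monomial, if_neg (fun h => hj (Fin.val_injective h))])
        (fun h => absurd (Finset.mem_univ i) h)]
      rw [coeff_monomial, if_pos rfl]
    have hrel : aeval α f * v 0 + aeval α g * v 1 = 0 := by
      have e : ∑ p : Fin n × Fin 2, c p • (α ^ (p.1 : ℕ) * v p.2)
          = (∑ i : Fin n, c (i, 0) • (α ^ (i : ℕ) * v 0))
            + ∑ i : Fin n, c (i, 1) • (α ^ (i : ℕ) * v 1) := by
        rw [Fintype.sum_prod_type, ← Finset.sum_add_distrib]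
        exact Finset.sum_congr rfl fun i _ => Fin.sum_univ_two _
      rw [← sum_smul_eq hdegf α (v 0), ← sum_smul_eq hdegg α (v 1)]
      simp only [hcf, hcg]
      rw [← e, hsum]
    obtain ⟨hf0, hg0⟩ := H f g hdegf hdegg hrel
    intro p
    obtain ⟨i, j⟩ := p
    fin_cases j
    · show c (i, 0) = 0
      rw [← hcf i, hf0, coeff_zero]
    · show c (i, 1) = 0
      rw [← hcg i, hg0, coeff_zero]

theorem P_iff {n : ℕ} (hn : 0 < n) {α : E} (hdeg : (minpoly F α).natDegree = 2 * n)
    (v : Fin 2 → E) :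
    (∀ f g : F[X], f.natDegree < n → g.natDegree < n →
      aeval α f * v 0 + aeval α g * v 1 = 0 → f = 0 ∧ g = 0) ↔
    (v 0 ≠ 0 ∧ ¬ Bad F n α (v 1 / v 0)) := by
  constructor
  · intro H
    have hv0 : v 0 ≠ 0 := by
      intro h0
      have := (H 1 0 (by simp; omega) (by simp; omega) (by simp [h0])).1
      simp at this
    refine ⟨hv0, ?_⟩
    rintro ⟨f, g, hg0, hf, hg, hrel⟩
    apply hg0
    refine (H f g hf hg ?_).2
    have h2 : aeval α f * v 0 + aeval α g * v 1
        = (aeval α f + aeval α g * (v 1 / v 0)) * v 0 := by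
      field_simp
    rw [h2, hrel, zero_mul]
  · rintro ⟨hv0, hbad⟩ f g hf hg hrel
    have hg0 : g = 0 := by
      by_contra hg0
      refine hbad ⟨f, g, hg0, hf, hg, ?_⟩
      have h2 : (aeval α f * v 0 + aeval α g * v 1) * (v 0)⁻¹
          = aeval α f + aeval α g * (v 1 / v 0) := by
        field_simp
      rw [hrel, zero_mul] at h2
      exact h2.symm
    subst hg0
    refine ⟨?_, rfl⟩
    simp only [map_zero, zero_mul, add_zero] at hrel
    have : aeval α f = 0 := by
      rcases mul_eq_zero.mp hrel with h | h
      · exact h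
      · exact absurd h hv0
    by_contra hf0
    exact aeval_ne hdeg hf0 (by omega) this

theorem bad_equiv {n : ℕ} (hn : 0 < n) {α : E} (hdeg : (minpoly F α).natDegree = 2 * n) :
    Nonempty ({p : F[X] × F[X] //
        p.2.Monic ∧ p.1.natDegree < n ∧ p.2.natDegree < n ∧ IsCoprime p.1 p.2} ≃
      {w : E // Bad F n α w}) := by
  classical
  have mem : ∀ p : {p : F[X] × F[X] //
      p.2.Monic ∧ p.1.natDegree < n ∧ p.2.natDegree < n ∧ IsCoprime p.1 p.2},
      Bad F n α (-(aeval α p.1.1 / aeval α p.1.2)) := by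
    rintro ⟨⟨f, g⟩, hmon, hf, hg, hcop⟩
    dsimp only at hmon hf hg hcop ⊢
    have hg0 : g ≠ 0 := hmon.ne_zero
    have hag : aeval α g ≠ 0 := aeval_ne hdeg hg0 (by omega)
    exact ⟨f, g, hg0, hf, hg, by field_simp; ring⟩
  refine ⟨Equiv.ofBijective
    (fun p => ⟨-(aeval α p.1.1 / aeval α p.1.2), mem p⟩) ⟨?_, ?_⟩⟩
  · rintro ⟨⟨f, g⟩, hmon, hf, hg, hcop⟩ ⟨⟨f', g'⟩, hmon', hf', hg', hcop'⟩ hEq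
    dsimp only at hmon hf hg hcop hmon' hf' hg' hcop'
    simp only [Subtype.mk.injEq, neg_inj] at hEq
    have hag : aeval α g ≠ 0 := aeval_ne hdeg hmon.ne_zero (by omega)
    have hag' : aeval α g' ≠ 0 := aeval_ne hdeg hmon'.ne_zero (by omega)
    rw [div_eq_div_iff hag hag'] at hEq
    have hkey : f * g' - f' * g = 0 := by
      by_contra hne
      refine aeval_ne hdeg hne ?_ ?_
      · calc (f * g' - f' * g).natDegree
            ≤ max (f * g').natDegree (f' * g).natDegree := natDegree_sub_le _ _
          _ < 2 * n := by
            have h1 := natDegree_mul_le (p := f) (q := g')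
            have h2 := natDegree_mul_le (p := f') (q := g)
            simp only [max_lt_iff]
            omega
      · rw [map_sub, map_mul, map_mul, hEq, sub_self]
    rw [sub_eq_zero] at hkey
    have hdvd1 : g ∣ g' := hcop.symm.dvd_of_dvd_mul_left ⟨f', by rw [hkey]; ring⟩
    have hdvd2 : g' ∣ g := hcop'.symm.dvd_of_dvd_mul_left ⟨f, by rw [← hkey]; ring⟩
    have hgg : g = g' := eq_of_monic_of_associated hmon hmon' (associated_of_dvd_dvd hdvd1 hdvd2)
    subst hgg
    have hff : f = f' := mul_right_cancel₀ hmon.ne_zero hkey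
    subst hff
    rfl
  · rintro ⟨w, f, g, hg0, hf, hg, hrel⟩
    have hd0 : GCDMonoid.gcd f g ≠ 0 := gcd_ne_zero_of_right hg0
    have hcop1 : IsCoprime (f / GCDMonoid.gcd f g) (g / GCDMonoid.gcd f g) :=
      isCoprime_div_gcd_div_gcd hg0
    set f1 := f / GCDMonoid.gcd f g with hf1d
    set g1 := g / GCDMonoid.gcd f g with hg1d
    have hg1 : g1 ≠ 0 := right_div_gcd_ne_zero hg0
    have hfd : GCDMonoid.gcd f g * f1 = f :=
      EuclideanDomain.mul_div_cancel' hd0 (gcd_dvd_left f g)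
    have hgd : GCDMonoid.gcd f g * g1 = g :=
      EuclideanDomain.mul_div_cancel' hd0 (gcd_dvd_right f g)
    have hdg : g.natDegree = (GCDMonoid.gcd f g).natDegree + g1.natDegree := by
      have h0 := natDegree_mul hd0 hg1
      rw [hgd] at h0
      exact h0
    have hdegf1 : f1.natDegree < n := by
      rcases eq_or_ne f1 0 with h | h
      · rw [h, natDegree_zero]; omega
      · have h2 : f.natDegree = (GCDMonoid.gcd f g).natDegree + f1.natDegree := by
          have h0 := natDegree_mul hd0 h
          rw [hfd] at h0
          exact h0
        omega
    set c := g1.leadingCoeff with hcdef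
    have hc0 : c ≠ 0 := leadingCoeff_ne_zero.mpr hg1
    set f2 := f1 * C c⁻¹ with hf2d
    set g2 := g1 * C c⁻¹ with hg2d
    have hmon2 : g2.Monic := monic_mul_leadingCoeff_inv hg1
    have hu : IsUnit (C c⁻¹ : F[X]) := isUnit_C.mpr (inv_ne_zero hc0).isUnit
    have hcop2 : IsCoprime f2 g2 := (isCoprime_mul_unit_right hu f1 g1).mpr hcop1
    have hdegf2 : f2.natDegree < n := by
      have h1 : f2.natDegree ≤ f1.natDegree + (C c⁻¹ : F[X]).natDegree := natDegree_mul_le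
      simp only [natDegree_C] at h1
      omega
    have hdegg2 : g2.natDegree < n := by
      have h1 : g2.natDegree ≤ g1.natDegree + (C c⁻¹ : F[X]).natDegree := natDegree_mul_le
      simp only [natDegree_C] at h1
      omega
    have hag2 : aeval α g2 ≠ 0 := aeval_ne hdeg hmon2.ne_zero (by omega)
    have hCC : (C c : F[X]) * C c⁻¹ = 1 := by
      rw [← C_mul, mul_inv_cancel₀ hc0, C_1]
    have hfactf : (GCDMonoid.gcd f g * C c) * f2 = f := by
      calc (GCDMonoid.gcd f g * C c) * f2
          = GCDMonoid.gcd f g * f1 * (C c * C c⁻¹) := by rw [hf2d]; ring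
        _ = f := by rw [hCC, mul_one, hfd]
    have hfactg : (GCDMonoid.gcd f g * C c) * g2 = g := by
      calc (GCDMonoid.gcd f g * C c) * g2
          = GCDMonoid.gcd f g * g1 * (C c * C c⁻¹) := by rw [hg2d]; ring
        _ = g := by rw [hCC, mul_one, hgd]
    have hu0 : GCDMonoid.gcd f g * C c ≠ 0 := mul_ne_zero hd0 (by
      simpa using hc0)
    have hudeg : (GCDMonoid.gcd f g * C c).natDegree < 2 * n := by
      have h1 := natDegree_mul_le (p := GCDMonoid.gcd f g) (q := (C c : F[X]))
      simp only [natDegree_C] at h1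
      omega
    have hau : aeval α (GCDMonoid.gcd f g * C c) ≠ 0 := aeval_ne hdeg hu0 hudeg
    have hrel2 : aeval α f2 + aeval α g2 * w = 0 := by
      have h3 : aeval α (GCDMonoid.gcd f g * C c) * (aeval α f2 + aeval α g2 * w) = 0 := by
        calc aeval α (GCDMonoid.gcd f g * C c) * (aeval α f2 + aeval α g2 * w)
            = aeval α ((GCDMonoid.gcd f g * C c) * f2)
              + aeval α ((GCDMonoid.gcd f g * C c) * g2) * w := by
              simp only [map_mul]; ring
          _ = aeval α f + aeval α g * w := by rw [hfactf, hfactg]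
          _ = 0 := hrel
      rcases mul_eq_zero.mp h3 with h | h
      · exact absurd h hau
      · exact h
    refine ⟨⟨⟨f2, g2⟩, hmon2, hdegf2, hdegg2, hcop2⟩, ?_⟩
    apply Subtype.ext
    show -(aeval α f2 / aeval α g2) = w
    rw [eq_neg_of_add_eq_zero_left hrel2, neg_div, neg_neg, mul_div_cancel_left₀ _ hag2]

theorem T0_card {n : ℕ} (hn : 0 < n) :
    Nat.card {x : {p : F[X] × F[X] //
        p.2.Monic ∧ p.1.natDegree < n ∧ p.2.natDegree < n ∧ IsCoprime p.1 p.2} //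
      ¬ x.1.1 ≠ 0} = 1 := by
  have huniq : ∀ x : {x : {p : F[X] × F[X] //
      p.2.Monic ∧ p.1.natDegree < n ∧ p.2.natDegree < n ∧ IsCoprime p.1 p.2} //
      ¬ x.1.1 ≠ 0}, x.1.1 = ((0 : F[X]), (1 : F[X])) := by
    rintro ⟨⟨⟨f, g⟩, hmon, hf, hg, hcop⟩, hne⟩
    simp only [not_not] at hne
    subst hne
    have hg1 : g = 1 := hmon.eq_one_of_isUnit (isCoprime_zero_left.mp hcop)
    subst hg1
    rfl
  rw [Nat.card_eq_one_iff_unique]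
  refine ⟨⟨fun a b => ?_⟩, ?_⟩
  · apply Subtype.ext
    apply Subtype.ext
    rw [huniq a, huniq b]
  · exact ⟨⟨⟨(0, 1), monic_one, by simpa using hn, by simpa using hn,
      isCoprime_zero_left.mpr isUnit_one⟩, by simp⟩⟩

end Aux

theorem stmt12 (F E : Type*) [Field F] [Fintype F] [Field E] [Algebra F E]
    (q n : ℕ) (hq : q = Fintype.card F) (hn : 0 < n)
    (hdim : Module.finrank F E = 2 * n)
    (α : E) (hα : Algebra.adjoin F {α} = ⊤) :
    Nat.card {v : Fin 2 → E //
        LinearIndependent F (fun p : Fin n × Fin 2 => α ^ (p.1 : ℕ) * v p.2) ∧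
        Submodule.span F (Set.range fun p : Fin n × Fin 2 => α ^ (p.1 : ℕ) * v p.2) = ⊤} =
      (q ^ (2 * n) -
          Nat.card {p : F[X] × F[X] //
            p.1 ≠ 0 ∧ p.2.Monic ∧ p.1.natDegree < n ∧ p.2.natDegree < n ∧ IsCoprime p.1 p.2}
          - 1) * (q ^ (2 * n) - 1) := by
  classical
  have hdeg : (minpoly F α).natDegree = 2 * n := minpoly_natDeg hdim hn α hα
  have hfd : FiniteDimensional F E := Module.finite_of_finrank_pos (by rw [hdim]; omega)
  have hEfin : Finite E := Module.finite_of_finite F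
  haveI : Nonempty (Fin n) := ⟨⟨0, hn⟩⟩
  have hcardE : Nat.card E = q ^ (2 * n) := by
    haveI : Fintype E := Fintype.ofFinite E
    rw [Nat.card_eq_fintype_card, Module.card_eq_pow_finrank (K := F) (V := E), hdim, hq]
  have e1 : ∀ v : Fin 2 → E,
      (LinearIndependent F (fun p : Fin n × Fin 2 => α ^ (p.1 : ℕ) * v p.2) ∧
        Submodule.span F (Set.range fun p : Fin n × Fin 2 => α ^ (p.1 : ℕ) * v p.2) = ⊤)
      ↔ (v 0 ≠ 0 ∧ ¬ Bad F n α (v 1 / v 0)) := by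
    intro v
    constructor
    · rintro ⟨hli, -⟩
      exact (P_iff hn hdeg v).mp ((indep_iff hn α v).mp hli)
    · intro h
      have hli := (indep_iff hn α v).mpr ((P_iff hn hdeg v).mpr h)
      exact ⟨hli, hli.span_eq_top_of_card_eq_finrank (by
        simp only [Fintype.card_prod, Fintype.card_fin, hdim]; omega)⟩
  let e2 : {v : Fin 2 → E // v 0 ≠ 0 ∧ ¬ Bad F n α (v 1 / v 0)} ≃
      {u : E // u ≠ 0} × {w : E // ¬ Bad F n α w} :=
    { toFun := fun v => (⟨v.1 0, v.2.1⟩, ⟨v.1 1 / v.1 0, v.2.2⟩)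
      invFun := fun p => ⟨![p.1.1, p.2.1 * p.1.1], p.1.2, by
        show ¬ Bad F n α (p.2.1 * p.1.1 / p.1.1)
        rw [mul_div_cancel_right₀ _ p.1.2]
        exact p.2.2⟩
      left_inv := fun v => by
        apply Subtype.ext
        funext i
        fin_cases i
        · rfl
        · show v.1 1 / v.1 0 * v.1 0 = v.1 1
          exact div_mul_cancel₀ _ v.2.1
      right_inv := fun p => by
        refine Prod.ext (Subtype.ext rfl) (Subtype.ext ?_)
        show p.2.1 * p.1.1 / p.1.1 = p.2.1
        exact mul_div_cancel_right₀ _ p.1.2 }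
  have hS : Nat.card {v : Fin 2 → E //
      LinearIndependent F (fun p : Fin n × Fin 2 => α ^ (p.1 : ℕ) * v p.2) ∧
      Submodule.span F (Set.range fun p : Fin n × Fin 2 => α ^ (p.1 : ℕ) * v p.2) = ⊤}
      = Nat.card {u : E // u ≠ 0} * Nat.card {w : E // ¬ Bad F n α w} := by
    rw [Nat.card_congr ((Equiv.subtypeEquivRight e1).trans e2), Nat.card_prod]
  have c1 : Nat.card {u : E // u ≠ 0} = q ^ (2 * n) - 1 := by
    rw [Nat.card_congr (unitsEquivNeZero (G₀ := E)).symm, Nat.card_units, hcardE]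
  obtain ⟨eb⟩ := bad_equiv (F := F) (E := E) hn hdeg
  haveI hTfin : Finite {p : F[X] × F[X] //
      p.2.Monic ∧ p.1.natDegree < n ∧ p.2.natDegree < n ∧ IsCoprime p.1 p.2} :=
    Finite.of_equiv _ eb.symm
  have cBad : Nat.card {w : E // Bad F n α w}
      = Nat.card {p : F[X] × F[X] //
          p.1 ≠ 0 ∧ p.2.Monic ∧ p.1.natDegree < n ∧ p.2.natDegree < n ∧ IsCoprime p.1 p.2}
        + 1 := by
    rw [← Nat.card_congr eb,
      ← Nat.card_congr (Equiv.sumCompl (fun p : {p : F[X] × F[X] //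
        p.2.Monic ∧ p.1.natDegree < n ∧ p.2.natDegree < n ∧ IsCoprime p.1 p.2} => p.1.1 ≠ 0)),
      Nat.card_sum]
    congr 1
    · refine Nat.card_congr ((Equiv.subtypeSubtypeEquivSubtypeInter
        (fun p : F[X] × F[X] =>
          p.2.Monic ∧ p.1.natDegree < n ∧ p.2.natDegree < n ∧ IsCoprime p.1 p.2)
        (fun p => p.1 ≠ 0)).trans
        (Equiv.subtypeEquivRight ?_))
      intro p
      tauto
    · exact T0_card hn
  have hsplit : Nat.card {w : E // Bad F n α w} + Nat.card {w : E // ¬ Bad F n α w}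
      = q ^ (2 * n) := by
    have h0 : Nat.card ({w : E // Bad F n α w} ⊕ {w : E // ¬ Bad F n α w}) = q ^ (2 * n) := by
      rw [Nat.card_congr (Equiv.sumCompl _), hcardE]
    rwa [Nat.card_sum] at h0
  have c2 : Nat.card {w : E // ¬ Bad F n α w}
      = q ^ (2 * n) -
        Nat.card {p : F[X] × F[X] //
          p.1 ≠ 0 ∧ p.2.Monic ∧ p.1.natDegree < n ∧ p.2.natDegree < n ∧ IsCoprime p.1 p.2}
        - 1 := by
    have h1 := Nat.eq_sub_of_add_eq' hsplit
    rw [h1, cBad, ← Nat.sub_sub]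
  rw [hS, c1, c2]
  exact Nat.mul_comm _ _
end

section
/- Let alpha in F_{q^{2n}} with F_{q^{2n}} = F_q(alpha). The map from the set of pairs (f_1, f_2) of coprime nonzero polynomials in F_q[X] of degree < n with f_2 monic to F_{q^{2n}}, given by (f_1, f_2) -> f_1(alpha)/f_2(alpha), is injective. -/
open Pointwise Polynomial

namespace Polynomial

theorem eq_of_isCoprime_of_monic_of_mul_eq_mul {R : Type*} [CommRing R] [IsDomain R]
    {f₁ f₂ g₁ g₂ : R[X]}
    (hf : IsCoprime f₁ f₂) (hg : IsCoprime g₁ g₂) (hf₂ : f₂.Monic) (hg₂ : g₂.Monic)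
    (h : f₁ * g₂ = g₁ * f₂) : f₁ = g₁ ∧ f₂ = g₂ := by
  have hf₂g₂ : f₂ ∣ g₂ := hf.symm.dvd_of_dvd_mul_left ⟨g₁, by rw [h, mul_comm]⟩
  have hg₂f₂ : g₂ ∣ f₂ := hg.symm.dvd_of_dvd_mul_left ⟨f₁, by rw [← h, mul_comm]⟩
  have h₂ : f₂ = g₂ := eq_of_monic_of_associated hf₂ hg₂ (associated_of_dvd_dvd hf₂g₂ hg₂f₂)
  subst h₂
  exact ⟨mul_right_cancel₀ hf₂.ne_zero h, rfl⟩

variable {F E : Type*} [Field F] [Field E] [Algebra F E] {α : E}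

theorem finrank_le_natDegree_of_aeval_eq_zero (hα : Algebra.adjoin F {α} = ⊤) {p : F[X]}
    (hp : p ≠ 0) (hpα : aeval α p = 0) : Module.finrank F E ≤ p.natDegree := by
  have hint : IsIntegral F α := IsAlgebraic.isIntegral ⟨p, hp, hpα⟩
  have hdeg : Module.finrank F E = (minpoly F α).natDegree := by
    rw [← IntermediateField.adjoin.finrank hint,
      IntermediateField.adjoin_eq_top_of_algebra F {α} hα, IntermediateField.finrank_top']
  exact hdeg ▸ natDegree_le_natDegree (minpoly.degree_le_of_ne_zero F α hp hpα)

theorem aeval_eq_zero_iff_of_natDegree_lt_finrank (hα : Algebra.adjoin F {α} = ⊤) {p : F[X]}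
    (hdeg : p.natDegree < Module.finrank F E) : aeval α p = 0 ↔ p = 0 := by
  refine ⟨fun hpα => ?_, fun hp => hp ▸ map_zero _⟩
  by_contra hp
  exact hdeg.not_ge (finrank_le_natDegree_of_aeval_eq_zero hα hp hpα)

end Polynomial

theorem stmt13_general (F E : Type*) [Field F] [Field E] [Algebra F E]
    (n : ℕ) (hdim : Module.finrank F E = 2 * n)
    (α : E) (hα : Algebra.adjoin F {α} = ⊤) :
    Function.Injective
      (fun p : {p : F[X] × F[X] //
          p.1 ≠ 0 ∧ p.2.Monic ∧ p.1.natDegree < n ∧ p.2.natDegree < n ∧ IsCoprime p.1 p.2} =>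
        aeval α p.1.1 / aeval α p.1.2) := by
  rintro ⟨⟨f₁, f₂⟩, _, hf₂, hdf₁, hdf₂, hf⟩ ⟨⟨g₁, g₂⟩, _, hg₂, hdg₁, hdg₂, hg⟩ hval
  dsimp only at hf₂ hdf₁ hdf₂ hf hg₂ hdg₁ hdg₂ hg hval
  have hden {q : F[X]} (hq : q.Monic) (hdq : q.natDegree < n) : aeval α q ≠ 0 :=
    (aeval_eq_zero_iff_of_natDegree_lt_finrank hα (by omega)).not.mpr hq.ne_zero
  rw [div_eq_div_iff (hden hf₂ hdf₂) (hden hg₂ hdg₂)] at hval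
  have hdeg : (f₁ * g₂ - g₁ * f₂).natDegree < Module.finrank F E := by
    have := natDegree_sub_le (f₁ * g₂) (g₁ * f₂)
    have := natDegree_mul_le (p := f₁) (q := g₂)
    have := natDegree_mul_le (p := g₁) (q := f₂)
    omega
  have hcross : f₁ * g₂ = g₁ * f₂ :=
    sub_eq_zero.mp ((aeval_eq_zero_iff_of_natDegree_lt_finrank hα hdeg).mp (by simp [hval]))
  obtain ⟨rfl, rfl⟩ := eq_of_isCoprime_of_monic_of_mul_eq_mul hf hg hf₂ hg₂ hcross
  rfl

theorem stmt13 (F E : Type*) [Field F] [Fintype F] [Field E] [Algebra F E]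
    (n : ℕ) (hn : 0 < n) (hdim : Module.finrank F E = 2 * n)
    (α : E) (hα : Algebra.adjoin F {α} = ⊤) :
    Function.Injective
      (fun p : {p : F[X] × F[X] //
          p.1 ≠ 0 ∧ p.2.Monic ∧ p.1.natDegree < n ∧ p.2.natDegree < n ∧ IsCoprime p.1 p.2} =>
        aeval α p.1.1 / aeval α p.1.2) :=
  stmt13_general F E n hdim α hα
end

section
/- Let alpha in F_{q^{mn}} with F_{q^{mn}} = F_q(alpha). For any nonzero x, y in F_{q^{mn}}, the number of m-dimensional alpha-splitting subspaces containing x equals the number of m-dimensional alpha-splitting subspaces containing y. -/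
open Pointwise Polynomial

/-!
Multiplication by `c = y / x` is an `F`-linear automorphism of `E` that commutes with
multiplication by `α`. Hence `W ↦ c • W` preserves dimension and the `α`-splitting property,
and it is a bijection from the subspaces containing `x` onto those containing `y`.
-/

namespace Submodule

variable {R M G₀ : Type*} [Ring R] [AddCommGroup M] [Module R M] [GroupWithZero G₀]
  [DistribMulAction G₀ M] [SMulCommClass G₀ R M] {c : G₀}

theorem pointwise_smul_eq_map_linearEquiv (hc : c ≠ 0) (N : Submodule R M) :
    c • N = N.map (DistribMulAction.toLinearEquiv R M (Units.mk0 c hc) : M →ₗ[R] M) := rfl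

theorem finrank_pointwise_smul [StrongRankCondition R] (hc : c ≠ 0) (N : Submodule R M) :
    Module.finrank R ↥(c • N) = Module.finrank R N := by
  rw [pointwise_smul_eq_map_linearEquiv hc]
  exact LinearEquiv.finrank_map_eq _ _

theorem smul_mem_pointwise_smul_iff₀ (hc : c ≠ 0) (N : Submodule R M) (x : M) :
    c • x ∈ c • N ↔ x ∈ N :=
  AddSubgroup.smul_mem_pointwise_smul_iff₀ hc N.toAddSubgroup x

end Submodule

theorem DirectSum.isInternal_submodule_pointwise_smul_iff {R M G₀ ι : Type*} [Ring R]
    [AddCommGroup M] [Module R M] [GroupWithZero G₀] [DistribMulAction G₀ M]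
    [SMulCommClass G₀ R M] [DecidableEq ι] {c : G₀} (hc : c ≠ 0) (N : ι → Submodule R M) :
    IsInternal (fun i => c • N i) ↔ IsInternal N := by
  let e := Submodule.orderIsoMapComap (DistribMulAction.toLinearEquiv R M (Units.mk0 c hc))
  change IsInternal (e ∘ N) ↔ IsInternal N
  rw [isInternal_submodule_iff_iSupIndep_and_iSup_eq_top,
    isInternal_submodule_iff_iSupIndep_and_iSup_eq_top, iSupIndep_map_orderIso_iff,
    show iSup (e ∘ N) = e (iSup N) from (e.map_iSup N).symm, map_eq_top_iff]

theorem isSplitting_smul_iff {F E : Type*} [Field F] [Field E] [Algebra F E] {n : ℕ}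
    {α c : E} (hc : c ≠ 0) {W : Submodule F E} :
    IsSplitting n α (c • W) ↔ IsSplitting n α W := by
  unfold IsSplitting
  simp only [smul_comm _ c]
  exact DirectSum.isInternal_submodule_pointwise_smul_iff hc _

theorem stmt15_general (F E : Type*) [Field F] [Field E] [Algebra F E]
    (m n : ℕ)
    (α : E)
    (x y : E) (hx : x ≠ 0) (hy : y ≠ 0) :
    Nat.card {W : Submodule F E // Module.finrank F W = m ∧ IsSplitting n α W ∧ x ∈ W} =
      Nat.card {W : Submodule F E // Module.finrank F W = m ∧ IsSplitting n α W ∧ y ∈ W} := by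
  obtain ⟨c, hc, rfl⟩ : ∃ c ≠ 0, y = c • x :=
    ⟨y / x, div_ne_zero hy hx, (div_mul_cancel₀ y hx).symm⟩
  refine Nat.card_congr <| (MulAction.toPerm (Units.mk0 c hc)).subtypeEquiv fun W => ?_
  change _ ↔ Module.finrank F ↥(c • W) = m ∧ IsSplitting n α (c • W) ∧ c • x ∈ c • W
  rw [Submodule.finrank_pointwise_smul hc, isSplitting_smul_iff hc,
    Submodule.smul_mem_pointwise_smul_iff₀ hc]

theorem stmt15 (F E : Type*) [Field F] [Fintype F] [Field E] [Algebra F E]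
    (m n : ℕ) (hm : 0 < m) (hn : 0 < n) (hdim : Module.finrank F E = m * n)
    (α : E) (hα : Algebra.adjoin F {α} = ⊤)
    (x y : E) (hx : x ≠ 0) (hy : y ≠ 0) :
    Nat.card {W : Submodule F E // Module.finrank F W = m ∧ IsSplitting n α W ∧ x ∈ W} =
      Nat.card {W : Submodule F E // Module.finrank F W = m ∧ IsSplitting n α W ∧ y ∈ W} :=
  stmt15_general F E m n α x y hx hy
end

section
/- Let alpha in F_{q^{mn}} with F_{q^{mn}} = F_q(alpha) and let x in F_{q^{mn}} be nonzero. Then S(alpha,m,n;q) = |S_alpha^x| * (q^{mn}-1)/(q^m-1), where S_alpha^x is the (nonempty) set of m-dimensional alpha-splitting subspaces containing x and S(alpha,m,n;q) is the total number of m-dimensional alpha-splitting subspaces. -/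
/-
Multiplication by a nonzero `c ∈ E` is an `F`-linear automorphism of `E` commuting with `α`, so
it permutes the `m`-dimensional `α`-splitting subspaces, and these automorphisms act transitively
on `E \ {0}`. Hence every nonzero vector lies in the same number `|S_α^x|` of splitting subspaces,
and counting the pairs `(W, y)` with `0 ≠ y ∈ W` in two ways gives
`S(α, m, n; q) (q^m - 1) = |S_α^x| (q^(mn) - 1)`. Such a subspace exists: for the power basis
`α^k`, `k < mn`, the translates `α^i W` of `W = span {1, α^n, …, α^((m-1)n)}` are spanned by the
disjoint blocks `{α^(i + nj)}` of the basis.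
-/

open Pointwise

open Function Module Submodule

section Scaling

variable {F E : Type*} [Field F] [Field E] [Algebra F E]

theorem Submodule.finrank_smul_of_ne_zero {c : E} (hc : c ≠ 0) (W : Submodule F E) :
    finrank F ↥(c • W) = finrank F W :=
  LinearEquiv.finrank_map_eq (DistribMulAction.toLinearEquiv F E (Units.mk0 c hc)) W

theorem Submodule.mem_smul_of_ne_zero_iff {c : E} (hc : c ≠ 0) (W : Submodule F E) (y : E) :
    y ∈ c • W ↔ c⁻¹ * y ∈ W := by
  rw [← SetLike.mem_coe, coe_pointwise_smul, Set.mem_smul_set_iff_inv_smul_mem₀ hc, smul_eq_mul,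
    SetLike.mem_coe]

theorem IsSplitting.smul {n : ℕ} {α : E} {W : Submodule F E} (hW : IsSplitting n α W)
    {c : E} (hc : c ≠ 0) : IsSplitting n α (c • W) := by
  rw [IsSplitting, DirectSum.isInternal_submodule_iff_iSupIndep_and_iSup_eq_top] at hW ⊢
  let e := orderIsoMapComap (DistribMulAction.toLinearEquiv F E (Units.mk0 c hc))
  have he : ∀ i : Fin n, α ^ (i : ℕ) • c • W = e (α ^ (i : ℕ) • W) := fun i => by
    rw [smul_smul, mul_comm, ← smul_smul]
    rfl
  simp only [he]
  exact ⟨(iSupIndep_map_orderIso_iff e).mpr hW.1, by rw [← e.map_iSup, hW.2, e.map_top]⟩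

end Scaling

section Blocks

variable {R M : Type*} [Ring R] [AddCommGroup M] [Module R M]

theorem LinearIndependent.iSupIndep_span_image {ι κ : Type*} {v : ι → M}
    (hv : LinearIndependent R v) {s : κ → Set ι} (hs : Pairwise (Disjoint on s)) :
    iSupIndep fun k => span R (v '' s k) := by
  intro k
  simp only [← span_iUnion₂, ← Set.image_iUnion₂]
  exact hv.disjoint_span_image (Set.disjoint_iUnion₂_right.mpr fun j hj => hs hj.symm)

theorem Module.Basis.isInternal_span_range_mk_right {ι κ : Type*} [DecidableEq ι]
    (b : Basis (κ × ι) R M) :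
    DirectSum.IsInternal fun i => span R (Set.range fun k => b (k, i)) := by
  have hfiber : ∀ i, (Set.range fun k => b (k, i)) = b '' (Prod.snd ⁻¹' {i}) := fun i => by
    ext; simp
  rw [DirectSum.isInternal_submodule_iff_iSupIndep_and_iSup_eq_top]
  simp only [hfiber]
  refine ⟨b.linearIndependent.iSupIndep_span_image (pairwise_disjoint_fiber _), ?_⟩
  rw [← span_iUnion, ← Set.image_iUnion, ← Set.preimage_iUnion, Set.iUnion_of_singleton,
    Set.preimage_univ, Set.image_univ, b.span_eq]

end Blocks

theorem PowerBasis.exists_isSplitting_one_mem {F E : Type*} [Field F] [Field E] [Algebra F E]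
    (pb : PowerBasis F E) {m n : ℕ} (hdim : pb.dim = m * n) (hm : 0 < m) :
    ∃ W : Submodule F E, Module.finrank F W = m ∧ IsSplitting n pb.gen W ∧ (1 : E) ∈ W := by
  have hn : 0 < n := Nat.pos_of_mul_pos_left (hdim ▸ pb.dim_pos)
  let b : Basis (Fin m × Fin n) F E :=
    pb.basis.reindex ((finCongr hdim).trans finProdFinEquiv.symm)
  have hb : ∀ j i, b (j, i) = pb.gen ^ (i : ℕ) * pb.gen ^ (n * j : ℕ) := fun j i => by
    simp [b, pow_add]
  let W := span F (Set.range fun j : Fin m => pb.gen ^ (n * j : ℕ))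
  have hblock : ∀ i : Fin n, pb.gen ^ (i : ℕ) • W = span F (Set.range fun j => b (j, i)) :=
    fun i => by
      rw [smul_span, ← Set.range_smul]
      simp only [hb, smul_eq_mul]
  have hW₀ : W = span F (Set.range fun j => b (j, ⟨0, hn⟩)) := by
    simpa using hblock ⟨0, hn⟩
  refine ⟨W, ?_, ?_, subset_span ⟨⟨0, hm⟩, by simp⟩⟩
  · rw [hW₀]
    exact (finrank_span_eq_card (b.linearIndependent.comp _ (Prod.mk_left_injective _))).trans
      (Fintype.card_fin m)
  · rw [IsSplitting, funext hblock]
    exact b.isInternal_span_range_mk_right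

section Counting

variable {F E : Type*} [Field F] [Field E] [Algebra F E]

theorem Submodule.card_mem_eq_of_ne_zero {P : Submodule F E → Prop}
    (hP : ∀ W, P W → ∀ c : E, c ≠ 0 → P (c • W)) {x y : E} (hx : x ≠ 0) (hy : y ≠ 0) :
    Nat.card {W // P W ∧ y ∈ W} = Nat.card {W // P W ∧ x ∈ W} := by
  let u : Eˣ := Units.mk0 (x * y⁻¹) (mul_ne_zero hx (inv_ne_zero hy))
  refine Nat.card_congr ((MulAction.toPerm u).subtypeEquiv fun W => ?_)
  have hux : (u : E)⁻¹ * x = y := by simp [u, hx]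
  show P W ∧ y ∈ W ↔ P ((u : E) • W) ∧ x ∈ (u : E) • W
  rw [mem_smul_of_ne_zero_iff u.ne_zero, hux]
  refine and_congr_left fun _ => ⟨fun hW => hP W hW _ u.ne_zero, fun huW => ?_⟩
  simpa only [inv_smul_smul₀ u.ne_zero] using hP _ huW _ (inv_ne_zero u.ne_zero)

open Finset in
theorem Submodule.card_mul_eq_card_mem_mul [Finite F] [FiniteDimensional F E]
    {P : Submodule F E → Prop} {m : ℕ}
    (hdim : ∀ W, P W → finrank F W = m) (hP : ∀ W, P W → ∀ c : E, c ≠ 0 → P (c • W))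
    {x : E} (hx : x ≠ 0) :
    Nat.card {W // P W} * (Nat.card F ^ m - 1) =
      Nat.card {W // P W ∧ x ∈ W} * (Nat.card F ^ finrank F E - 1) := by
  classical
  have : Finite E := Module.finite_of_finite F
  have : Fintype E := Fintype.ofFinite E
  have : Fintype (Submodule F E) := Fintype.ofFinite _
  have hnonzero (V : Submodule F E) :
      #{y : E | y ≠ 0 ∧ y ∈ V} = Nat.card F ^ finrank F V - 1 := by
    calc #{y : E | y ≠ 0 ∧ y ∈ V} = #(({y | y ∈ V} : Finset E).erase 0) := by
          congr 1; ext; simp [and_comm]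
      _ = Nat.card F ^ finrank F V - 1 := by
          rw [card_erase_of_mem (by simp), ← Fintype.card_subtype, ← Nat.card_eq_fintype_card,
            Module.natCard_eq_pow_finrank (K := F) (V := V)]
  have h := card_mul_eq_card_mul (s := {W | P W}) (t := {y : E | y ≠ 0}) (fun W y => y ∈ W)
    (m := Nat.card F ^ m - 1) (n := Nat.card {W // P W ∧ x ∈ W})
    (fun W hW => by
      rw [bipartiteAbove, filter_filter, hnonzero, hdim W (mem_filter.mp hW).2])
    (fun y hy => by
      rw [bipartiteBelow, filter_filter, ← card_mem_eq_of_ne_zero hP hx (mem_filter.mp hy).2,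
        Nat.card_eq_fintype_card, Fintype.card_subtype])
  rw [Nat.card_eq_fintype_card, Fintype.card_subtype, h, mul_comm, filter_ne',
    card_erase_of_mem (mem_univ _), card_univ, ← Nat.card_eq_fintype_card (α := E),
    Module.natCard_eq_pow_finrank (K := F) (V := E)]

end Counting

theorem stmt16 (F E : Type*) [Field F] [Fintype F] [Field E] [Algebra F E]
    (q m n : ℕ) (hq : q = Fintype.card F) (hm : 0 < m) (hn : 0 < n)
    (hdim : Module.finrank F E = m * n)
    (α : E) (hα : Algebra.adjoin F {α} = ⊤) (x : E) (hx : x ≠ 0) :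
    Nonempty {W : Submodule F E // Module.finrank F W = m ∧ IsSplitting n α W ∧ x ∈ W} ∧
    Nat.card {W : Submodule F E // Module.finrank F W = m ∧ IsSplitting n α W} =
      Nat.card {W : Submodule F E // Module.finrank F W = m ∧ IsSplitting n α W ∧ x ∈ W} *
        ((q ^ (m * n) - 1) / (q ^ m - 1)) := by
  have : FiniteDimensional F E := .of_finrank_pos (by rw [hdim]; positivity)
  let pb := PowerBasis.ofAdjoinEqTop (IsIntegral.of_finite F α) hα
  obtain ⟨W₀, hW₀, hsplit, hone⟩ := pb.exists_isSplitting_one_mem (pb.finrank ▸ hdim) hm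
  refine ⟨⟨x • W₀, by rw [finrank_smul_of_ne_zero hx, hW₀], hsplit.smul hx,
    by simpa using smul_mem_pointwise_smul 1 x W₀ hone⟩, ?_⟩
  have hcount := card_mul_eq_card_mem_mul (P := fun W => finrank F W = m ∧ IsSplitting n α W)
    (fun W hW => hW.1)
    (fun W hW c hc => ⟨by rw [finrank_smul_of_ne_zero hc, hW.1], hW.2.smul hc⟩) hx
  simp only [and_assoc, hdim, Nat.card_eq_fintype_card (α := F), ← hq] at hcount
  have hdvd : q ^ m - 1 ∣ q ^ (m * n) - 1 := by
    simpa [pow_mul] using Nat.sub_dvd_pow_sub_pow (q ^ m) 1 n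
  have hpos : 0 < q ^ m - 1 :=
    Nat.sub_pos_of_lt (Nat.one_lt_pow hm.ne' (hq ▸ Fintype.one_lt_card))
  rw [← Nat.mul_div_assoc _ hdvd, ← hcount, Nat.mul_div_cancel _ hpos]
end

section
/- Let T be a cyclic F_q-linear endomorphism of F_q^n with minimal polynomial p_T = f_1^{e_1} ... f_k^{e_k}, where f_i are distinct monic irreducibles of degree n_i. Then the number of 1-dimensional F_q-subspaces W with F_q^n = W ⊕ T(W) ⊕ ... ⊕ T^{n-1}(W) equals (q^n / (q-1)) * prod_{i=1}^k (1 - q^{-n_i}). -/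
/-!
A line `F ∙ w` splits `V` exactly when `w` is a cyclic vector of `T`, and each such line contains
`q - 1` cyclic vectors. Fix a cyclic vector `v`, so that every vector is `u(T) v`; then `u(T) v` is
cyclic iff `u` is coprime to the minimal polynomial `∏ fᵢ ^ eᵢ`, i.e. iff `u(T) v` lies in no range
`fᵢ(T) V`. An intersection of these ranges is the range of `(∏_{i ∈ t} fᵢ)(T)`, which has
`q ^ (n - ∑_{i ∈ t} nᵢ)` elements, so inclusion–exclusion counts `q ^ n ∏ (1 - q ^ (-nᵢ))` cyclic
vectors.
-/

open Function Polynomial Module Submodule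

theorem isCoprime_prod_pow_iff {R ι : Type*} [CommRing R] [IsBezout R] [Fintype ι]
    {f : ι → R} {e : ι → ℕ} (hf : ∀ i, Irreducible (f i)) (he : ∀ i, 0 < e i) {u : R} :
    IsCoprime (∏ i, f i ^ e i) u ↔ ∀ i, ¬ f i ∣ u := by
  simp only [IsCoprime.prod_left_iff, Finset.mem_univ, forall_const,
    IsCoprime.pow_left_iff (he _), (hf _).coprime_iff_not_dvd]

theorem prod_dvd_iff_of_pairwise_isCoprime {R ι : Type*} [CommSemiring R] {f : ι → R}
    (hf : Pairwise (IsCoprime on f)) {t : Finset ι} {u : R} :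
    ∏ i ∈ t, f i ∣ u ↔ ∀ i ∈ t, f i ∣ u :=
  ⟨fun h _ hi => (Finset.dvd_prod_of_mem f hi).trans h,
    Finset.prod_dvd_of_coprime (hf.set_pairwise _)⟩

section

variable {F V : Type*} [Field F] [AddCommGroup V] [Module F V]

theorem Polynomial.pairwise_isCoprime_of_monic_irreducible {ι : Type*} {f : ι → F[X]}
    (hf : ∀ i, (f i).Monic ∧ Irreducible (f i)) (hinj : Function.Injective f) :
    Pairwise (IsCoprime on f) := fun i j hij =>
  (hf i).2.coprime_iff_not_dvd.2 fun h => hij <| hinj <|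
    eq_of_monic_of_associated (hf i).1 (hf j).1 ((hf i).2.associated_of_dvd (hf j).2 h)

noncomputable def aevalApply (T : V →ₗ[F] V) (w : V) : F[X] →ₗ[F] V :=
  LinearMap.applyₗ w ∘ₗ (aeval T).toLinearMap

@[simp]
theorem aevalApply_apply (T : V →ₗ[F] V) (w : V) (u : F[X]) :
    aevalApply T w u = aeval T u w := rfl

theorem aeval_apply_comm (T : V →ₗ[F] V) (u x : F[X]) (w : V) :
    aeval T u (aeval T x w) = aeval T x (aeval T u w) := by
  rw [← Module.End.mul_apply, ← map_mul, mul_comm, map_mul, Module.End.mul_apply]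

theorem aeval_mul_apply (T : V →ₗ[F] V) (u x : F[X]) (w : V) :
    aeval T (u * x) w = aeval T u (aeval T x w) := by
  rw [map_mul, Module.End.mul_apply]

theorem finrank_range_aevalApply {T : V →ₗ[F] V} {w : V} {d : F[X]} (hd : d.Monic)
    (hann : ∀ x : F[X], aeval T x w = 0 ↔ d ∣ x) :
    finrank F (LinearMap.range (aevalApply T w)) = d.natDegree := by
  set g := (aevalApply T w).domRestrict (degreeLT F d.natDegree)
  have hinj : Function.Injective g := by
    rw [← LinearMap.ker_eq_bot, LinearMap.ker_eq_bot']
    rintro ⟨u, hu⟩ h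
    rw [mem_degreeLT, ← degree_eq_natDegree hd.ne_zero] at hu
    exact Subtype.ext (eq_zero_of_dvd_of_degree_lt ((hann u).1 h) hu)
  have hrange : LinearMap.range g = LinearMap.range (aevalApply T w) := by
    refine le_antisymm (LinearMap.range_domRestrict_le_range _ _) ?_
    rintro _ ⟨u, rfl⟩
    refine ⟨⟨u %ₘ d, mem_degreeLT.2 ?_⟩, ?_⟩
    · exact degree_eq_natDegree hd.ne_zero ▸ degree_modByMonic_lt u hd
    · have hmul : aeval T (d * (u /ₘ d)) w = 0 := (hann _).2 (dvd_mul_right _ _)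
      change aeval T (u %ₘ d) w = aeval T u w
      rw [modByMonic_eq_sub_mul_div, map_sub, LinearMap.sub_apply, hmul, sub_zero]
  rw [← hrange, LinearMap.finrank_range_of_inj hinj, (degreeLTEquiv F _).finrank_eq,
    finrank_fin_fun]

def IsCyclicVector (T : V →ₗ[F] V) (w : V) : Prop :=
  Function.Surjective (aevalApply T w)

namespace IsCyclicVector

variable {T : V →ₗ[F] V} {v : V}

theorem aeval_apply_eq_zero_iff (hv : IsCyclicVector T v) {x : F[X]} :
    aeval T x v = 0 ↔ minpoly F T ∣ x := by
  refine ⟨fun hx => minpoly.dvd F T (LinearMap.ext fun y => ?_), fun ⟨c, hc⟩ => ?_⟩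
  · obtain ⟨u, rfl⟩ := hv y
    simp [aeval_apply_comm T x u, hx]
  · simp [hc, minpoly.aeval]

theorem isCyclicVector_aeval_iff (hv : IsCyclicVector T v) {u : F[X]} :
    IsCyclicVector T (aeval T u v) ↔ IsCoprime (minpoly F T) u := by
  constructor
  · intro hw
    obtain ⟨a, ha⟩ := hw v
    have : aeval T (a * u - 1) v = 0 := by
      simpa [sub_eq_zero, aeval_mul_apply] using ha
    obtain ⟨c, hc⟩ := hv.aeval_apply_eq_zero_iff.1 this
    exact ⟨-c, a, by linear_combination hc⟩
  · rintro ⟨a, b, hab⟩ y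
    obtain ⟨c, rfl⟩ := hv y
    have hbu : aeval T (b * u) v = v := by
      have : aeval T (b * u - 1) v = 0 :=
        hv.aeval_apply_eq_zero_iff.2 ⟨-a, by linear_combination hab⟩
      simpa [sub_eq_zero] using this
    refine ⟨c * b, ?_⟩
    rw [aevalApply_apply, aeval_mul_apply, ← aeval_mul_apply T b, hbu]
    rfl

theorem aeval_apply_mem_range_iff (hv : IsCyclicVector T v) {g u : F[X]}
    (hg : g ∣ minpoly F T) :
    aeval T u v ∈ LinearMap.range (aeval T g) ↔ g ∣ u := by
  constructor
  · rintro ⟨y, hy⟩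
    obtain ⟨c, rfl⟩ := hv y
    have : aeval T (u - g * c) v = 0 := by
      rw [map_sub, LinearMap.sub_apply, aeval_mul_apply, ← hy, aevalApply_apply, sub_self]
    exact (dvd_sub_left (dvd_mul_right g c)).1 (hg.trans (hv.aeval_apply_eq_zero_iff.1 this))
  · rintro ⟨c, rfl⟩
    exact ⟨aeval T c v, (aeval_mul_apply T g c v).symm⟩

theorem finrank_range_aeval [FiniteDimensional F V] (hv : IsCyclicVector T v) {g s : F[X]}
    (hgs : minpoly F T = g * s) (hs : s.Monic) :
    finrank F (LinearMap.range (aeval T g)) = s.natDegree := by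
  have hg : g ≠ 0 := left_ne_zero_of_mul (hgs ▸ minpoly.ne_zero (Algebra.IsIntegral.isIntegral T))
  have hrange : LinearMap.range (aeval T g) = LinearMap.range (aevalApply T (aeval T g v)) := by
    ext y
    constructor
    · rintro ⟨x, rfl⟩
      obtain ⟨c, rfl⟩ := hv x
      exact ⟨c, aeval_apply_comm T c g v⟩
    · rintro ⟨c, rfl⟩
      exact ⟨aeval T c v, aeval_apply_comm T g c v⟩
  rw [hrange]
  refine finrank_range_aevalApply hs fun x => ?_
  rw [← aeval_mul_apply, hv.aeval_apply_eq_zero_iff, hgs, mul_comm x, mul_dvd_mul_iff_left hg]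

theorem natDegree_minpoly [FiniteDimensional F V] (hv : IsCyclicVector T v) :
    (minpoly F T).natDegree = finrank F V := by
  have := hv.finrank_range_aeval (one_mul _).symm (minpoly.monic (Algebra.IsIntegral.isIntegral T))
  rwa [map_one, Module.End.one_eq_id, LinearMap.range_id, finrank_top, eq_comm] at this

theorem smul (hv : IsCyclicVector T v) {c : F} (hc : c ≠ 0) : IsCyclicVector T (c • v) := by
  intro y
  obtain ⟨u, rfl⟩ := hv y
  exact ⟨c⁻¹ • u, by simp [smul_smul, inv_mul_cancel₀ hc]⟩

theorem ne_zero [Nontrivial V] (hv : IsCyclicVector T v) : v ≠ 0 := by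
  rintro rfl
  obtain ⟨y, hy⟩ := exists_ne (0 : V)
  obtain ⟨u, hu⟩ := hv y
  simp_all

end IsCyclicVector

theorem isCyclicVector_iff_span_eq_top [FiniteDimensional F V] {T : V →ₗ[F] V} {w : V} :
    IsCyclicVector T w ↔
      span F (Set.range fun i : Fin (finrank F V) => (T ^ (i : ℕ)) w) = ⊤ := by
  refine ⟨fun hw => eq_top_iff.2 fun y _ => ?_, fun h y => ?_⟩
  · obtain ⟨u, rfl⟩ := hw y
    have hP := minpoly.monic (Algebra.IsIntegral.isIntegral (R := F) T)
    rw [aevalApply_apply, ← aeval_modByMonic_eq_self_of_root (minpoly.aeval F T)]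
    by_cases h0 : u %ₘ minpoly F T = 0
    · simp [h0]
    have hdeg : (u %ₘ minpoly F T).natDegree < finrank F V := by
      rw [natDegree_lt_iff_degree_lt h0, ← hw.natDegree_minpoly, ← degree_eq_natDegree hP.ne_zero]
      exact degree_modByMonic_lt u hP
    rw [aeval_eq_sum_range' hdeg, LinearMap.sum_apply]
    exact sum_mem fun i hi => smul_mem _ _ (subset_span ⟨⟨i, Finset.mem_range.1 hi⟩, rfl⟩)
  · obtain ⟨c, hc⟩ := (mem_span_range_iff_exists_fun F).1 (h ▸ mem_top : y ∈ span F _)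
    exact ⟨∑ i : Fin (finrank F V), monomial i (c i), by simp [← hc, aeval_monomial]⟩

namespace IsCyclicVector

variable {T : V →ₗ[F] V} {v : V}

theorem natCard_range_aeval_mul_pow [Finite F] [FiniteDimensional F V]
    (hv : IsCyclicVector T v) {g : F[X]} (hg : g.Monic) (hgP : g ∣ minpoly F T) :
    Nat.card (LinearMap.range (aeval T g)) * Nat.card F ^ g.natDegree =
      Nat.card F ^ finrank F V := by
  obtain ⟨s, hs⟩ := hgP
  have hsm : s.Monic := hg.of_mul_monic_left (hs ▸ minpoly.monic (Algebra.IsIntegral.isIntegral T))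
  rw [natCard_eq_pow_finrank (K := F), hv.finrank_range_aeval hs hsm, ← pow_add,
    ← hv.natDegree_minpoly, hs, natDegree_mul hg.ne_zero hsm.ne_zero, add_comm]

variable {ι : Type*} {f : ι → F[X]} {e : ι → ℕ}

theorem isCyclicVector_iff_forall_notMem_range [Fintype ι] (hv : IsCyclicVector T v)
    (hf : ∀ i, Irreducible (f i)) (he : ∀ i, 0 < e i) (hmin : minpoly F T = ∏ i, f i ^ e i)
    (w : V) : IsCyclicVector T w ↔ ∀ i, w ∉ LinearMap.range (aeval T (f i)) := by
  have hdvd (i : ι) : f i ∣ minpoly F T :=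
    hmin ▸ (dvd_pow_self _ (he i).ne').trans (Finset.dvd_prod_of_mem _ (Finset.mem_univ i))
  obtain ⟨u, rfl⟩ := hv w
  simp only [aevalApply_apply, hv.aeval_apply_mem_range_iff (hdvd _), hv.isCyclicVector_aeval_iff,
    hmin, isCoprime_prod_pow_iff hf he]

theorem mem_range_aeval_prod_iff (hv : IsCyclicVector T v) (hf : Pairwise (IsCoprime on f))
    {t : Finset ι} (hdvd : ∀ i ∈ t, f i ∣ minpoly F T) (w : V) :
    w ∈ LinearMap.range (aeval T (∏ i ∈ t, f i)) ↔
      ∀ i ∈ t, w ∈ LinearMap.range (aeval T (f i)) := by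
  obtain ⟨u, rfl⟩ := hv w
  rw [aevalApply_apply,
    hv.aeval_apply_mem_range_iff ((prod_dvd_iff_of_pairwise_isCoprime hf).2 hdvd),
    prod_dvd_iff_of_pairwise_isCoprime hf]
  exact forall₂_congr fun i hi => (hv.aeval_apply_mem_range_iff (hdvd i hi)).symm

theorem natCard_isCyclicVector [Finite F] [FiniteDimensional F V] [Fintype ι]
    (hv : IsCyclicVector T v) (hf : ∀ i, (f i).Monic ∧ Irreducible (f i))
    (hinj : Function.Injective f) (he : ∀ i, 0 < e i) (hmin : minpoly F T = ∏ i, f i ^ e i) :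
    (Nat.card {w // IsCyclicVector T w} : ℚ) =
      (Nat.card F : ℚ) ^ finrank F V * ∏ i, (1 - ((Nat.card F : ℚ) ^ (f i).natDegree)⁻¹) := by
  classical
  have : Finite V := Module.finite_of_finite F
  have : Fintype V := Fintype.ofFinite V
  have hpair := pairwise_isCoprime_of_monic_irreducible hf hinj
  have hdvd (i : ι) : f i ∣ minpoly F T :=
    hmin ▸ (dvd_pow_self _ (he i).ne').trans (Finset.dvd_prod_of_mem _ (Finset.mem_univ i))
  have hq : (Nat.card F : ℚ) ≠ 0 := Nat.cast_ne_zero.2 Nat.card_pos.ne'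
  let S (i : ι) : Finset V := {w | w ∈ LinearMap.range (aeval T (f i))}
  have hcyc : ({w | IsCyclicVector T w} : Finset V) = Finset.univ.inf fun i => (S i)ᶜ := by
    ext w
    simp only [S, Finset.mem_filter, Finset.mem_univ, true_and, Finset.mem_inf, Finset.mem_compl,
      forall_const, hv.isCyclicVector_iff_forall_notMem_range (fun i => (hf i).2) he hmin]
  have hinter (t : Finset ι) :
      t.inf S = ({w | w ∈ LinearMap.range (aeval T (∏ i ∈ t, f i))} : Finset V) := by
    ext w
    simp only [S, Finset.mem_filter, Finset.mem_univ, true_and, Finset.mem_inf,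
      hv.mem_range_aeval_prod_iff hpair (fun i _ => hdvd i)]
  have hcard (t : Finset ι) : ((t.inf S).card : ℚ) =
      (Nat.card F : ℚ) ^ finrank F V * ∏ i ∈ t, ((Nat.card F : ℚ) ^ (f i).natDegree)⁻¹ := by
    have hmon : (∏ i ∈ t, f i).Monic := monic_prod_of_monic _ _ fun i _ => (hf i).1
    have := hv.natCard_range_aeval_mul_pow hmon
      ((prod_dvd_iff_of_pairwise_isCoprime hpair).2 fun i _ => hdvd i)
    rw [natDegree_prod_of_monic _ _ fun i _ => (hf i).1, ← Finset.prod_pow_eq_pow_sum] at this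
    rw [hinter, ← Fintype.card_subtype, ← Nat.card_eq_fintype_card, Finset.prod_inv_distrib,
      eq_mul_inv_iff_mul_eq₀ (Finset.prod_ne_zero_iff.2 fun i _ => pow_ne_zero _ hq)]
    exact_mod_cast this
  have hincl :=
    congrArg (Int.cast : ℤ → ℚ) (Finset.inclusion_exclusion_card_inf_compl Finset.univ S)
  push_cast at hincl
  rw [Nat.card_eq_fintype_card, Fintype.card_subtype, hcyc, hincl]
  simp_rw [sub_eq_add_neg, Finset.prod_one_add, Finset.mul_sum]
  refine Finset.sum_congr rfl fun t _ => ?_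
  rw [hcard, Finset.prod_neg]
  ring

end IsCyclicVector

theorem Submodule.exists_eq_span_singleton_of_finrank_eq_one {W : Submodule F V}
    (h : finrank F W = 1) : ∃ w ≠ 0, W = span F {w} := by
  obtain ⟨w, hwW, hw0, hle⟩ := (rank_submodule_eq_one_iff W).1 (rank_eq_one_iff_finrank_eq_one.2 h)
  exact ⟨w, hw0, le_antisymm hle ((span_singleton_le_iff_mem _ _).2 hwW)⟩

theorem DirectSum.isInternal_span_singleton_iff {ι : Type*} [Fintype ι] [DecidableEq ι] (b : ι → V)
    (h : Fintype.card ι = finrank F V) :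
    DirectSum.IsInternal (fun i => span F {b i}) ↔ span F (Set.range b) = ⊤ := by
  rw [DirectSum.isInternal_submodule_iff_iSupIndep_and_iSup_eq_top, ← span_range_eq_iSup]
  exact ⟨And.right, fun htop =>
    ⟨(linearIndependent_of_top_le_span_of_card_eq_finrank htop.ge h).iSupIndep_span_singleton,
      htop⟩⟩

theorem natCard_span_singleton_mul_natCard_units [Finite V] {p : V → Prop} (hp0 : ¬ p 0)
    (hsmul : ∀ (c : Fˣ) (w : V), p w → p (c • w)) :
    Nat.card {W : Submodule F V // ∃ w, p w ∧ W = span F {w}} * Nat.card Fˣ =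
      Nat.card {w // p w} := by
  classical
  let π : {w // p w} → {W : Submodule F V // ∃ w, p w ∧ W = span F {w}} :=
    fun w => ⟨span F {w.1}, w.1, w.2, rfl⟩
  have hπ : Function.Surjective π := by
    rintro ⟨_, w, hw, rfl⟩
    exact ⟨⟨w, hw⟩, rfl⟩
  have := Finite.of_surjective π hπ
  have := Fintype.ofFinite {W : Submodule F V // ∃ w, p w ∧ W = span F {w}}
  have hfiber W : Nat.card {w // π w = W} = Nat.card Fˣ := by
    obtain ⟨_, w₀, hw₀, rfl⟩ := W
    have hw₀0 : w₀ ≠ 0 := fun h => hp0 (h ▸ hw₀)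
    refine (Nat.card_congr (Equiv.ofBijective
      (fun c : Fˣ => ⟨⟨c • w₀, hsmul c w₀ hw₀⟩, Subtype.ext (span_singleton_group_smul_eq F c w₀)⟩)
      ⟨fun c c' h => ?_, fun ⟨⟨w, hw⟩, hπw⟩ => ?_⟩)).symm
    · exact Units.ext (smul_left_injective F hw₀0 (congrArg (fun x => x.1.1) h))
    · obtain ⟨c, hc⟩ := span_singleton_eq_span_singleton.1 (congrArg Subtype.val hπw).symm
      exact ⟨c, Subtype.ext (Subtype.ext hc)⟩
  rw [← Nat.card_congr (Equiv.sigmaFiberEquiv π), Nat.card_sigma]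
  simp [hfiber, Nat.card_eq_fintype_card]

theorem finrank_eq_one_and_isInternal_map_pow_iff [FiniteDimensional F V] [Nontrivial V]
    {T : V →ₗ[F] V} {W : Submodule F V} :
    (finrank F W = 1 ∧ DirectSum.IsInternal fun i : Fin (finrank F V) => W.map (T ^ (i : ℕ))) ↔
      ∃ w, IsCyclicVector T w ∧ W = span F {w} := by
  have hmap (w : V) (i : ℕ) : (span F {w}).map (T ^ i) = span F {(T ^ i) w} := by
    rw [map_span, Set.image_singleton]
  have hcard : Fintype.card (Fin (finrank F V)) = finrank F V := Fintype.card_fin _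
  constructor
  · rintro ⟨h1, h2⟩
    obtain ⟨w, -, rfl⟩ := exists_eq_span_singleton_of_finrank_eq_one h1
    simp_rw [hmap] at h2
    exact ⟨w, isCyclicVector_iff_span_eq_top.2
      ((DirectSum.isInternal_span_singleton_iff _ hcard).1 h2), rfl⟩
  · rintro ⟨w, hw, rfl⟩
    refine ⟨finrank_span_singleton hw.ne_zero, ?_⟩
    simp_rw [hmap]
    exact (DirectSum.isInternal_span_singleton_iff _ hcard).2 (isCyclicVector_iff_span_eq_top.1 hw)

end

theorem stmt19 (F V : Type*) [Field F] [Fintype F] [AddCommGroup V] [Module F V]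
    (q n : ℕ) (hq : q = Fintype.card F) (hn : 0 < n)
    (hdim : Module.finrank F V = n)
    (T : V →ₗ[F] V)
    (hcyc : ∃ v : V, Submodule.span F (Set.range fun i : Fin n => (T ^ (i : ℕ)) v) = ⊤)
    (k : ℕ) (f : Fin k → Polynomial F) (e : Fin k → ℕ)
    (hf : ∀ i, (f i).Monic ∧ Irreducible (f i)) (hinj : Function.Injective f)
    (he : ∀ i, 0 < e i)
    (hmin : minpoly F T = ∏ i : Fin k, f i ^ e i) :
    (Nat.card {W : Submodule F V // Module.finrank F W = 1 ∧
        DirectSum.IsInternal (fun i : Fin n => Submodule.map (T ^ (i : ℕ)) W)} : ℚ) =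
      (q : ℚ) ^ n / (q - 1) * ∏ i : Fin k, (1 - ((q : ℚ) ^ (f i).natDegree)⁻¹) := by
  subst hq hdim
  obtain ⟨v, hv⟩ := hcyc
  have : FiniteDimensional F V := Module.finite_of_finrank_pos hn
  have : Nontrivial V := Module.nontrivial_of_finrank_pos hn
  have : Finite V := Module.finite_of_finite F
  replace hv : IsCyclicVector T v := isCyclicVector_iff_span_eq_top.2 hv
  have hlines := natCard_span_singleton_mul_natCard_units (fun h => h.ne_zero rfl)
    fun (c : Fˣ) w (hw : IsCyclicVector T w) => hw.smul c.ne_zero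
  have hcount := hv.natCard_isCyclicVector hf hinj he hmin
  rw [← hlines, Nat.card_units, Nat.cast_mul, Nat.cast_sub Nat.card_pos, Nat.cast_one] at hcount
  have hq : (Nat.card F : ℚ) - 1 ≠ 0 := sub_ne_zero.2 (by exact_mod_cast Finite.one_lt_card.ne')
  rw [Nat.card_congr (Equiv.subtypeEquivRight fun W => finrank_eq_one_and_isInternal_map_pow_iff),
    ← Nat.card_eq_fintype_card, div_mul_eq_mul_div, ← hcount, mul_div_cancel_right₀ _ hq]
end
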